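/- Let n and d be positive integers and let B^base = (B^base_1,…,B^base_d), B^prev, B^next be vectors of positive integers with B^base_q | B^prev_q | B^next_q | n for every q. Let x : (ZMod n)^d → ℂ, let α ∈ (ZMod n)^d, let β ∈ ∏_q ZMod B^next_q, and let b ∈ ∏_q {0,…,B^base_q − 1}. Then U_x^{α + ℓ(β)}(B^base, b) = ∑_{r ∈ ∏_q {0,…,B^prev_q/B^base_q − 1}} ∑_{s ∈ ∏_q {0,…,B^next_q/B^prev_q − 1}} e^{2πi·∑_q (b_q + r_q·B^base_q + s_q·B^prev_q)·rep(β_q)/B^next_q} · U_x^α(B^next, φ(b,r,s)), where ℓ(β) ∈ (ZMod n)^d has q-th coordinate rep(β_q)·(n/B^next_q), rep denotes the standard representative, and φ(b,r,s) ∈ ∏_q ZMod B^next_q has q-th coordinate b_q + r_q·B^base_q + s_q·B^prev_q. -/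

import Mathlib

open scoped BigOperators

/-- The `d`-dimensional discrete Fourier transform on `(ZMod n)^d`. -/
noncomputable def dft (n d : ℕ) [NeZero n] (x : (Fin d → ZMod n) → ℂ) :
    (Fin d → ZMod n) → ℂ :=
  fun f => ∑ t : Fin d → ZMod n, x t *
    Complex.exp (-(2 * (Real.pi : ℂ) * Complex.I) *
      (((∑ q, f q * t q : ZMod n)).val : ℂ) / (n : ℂ))

/-- The bucketing of `x` with shift `a`:
`U_x^a(B, b) = ∑_{f mod B = b} x̂(f) · e^{2πi·(f·a)/n}`. -/
noncomputable def bucket (n d : ℕ) [NeZero n] (B : Fin d → ℕ) (hB : ∀ q, B q ∣ n)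
    (x : (Fin d → ZMod n) → ℂ) (a : Fin d → ZMod n) (b : ∀ q, ZMod (B q)) : ℂ :=
  ∑ f ∈ Finset.univ.filter (fun f : Fin d → ZMod n =>
      ∀ q, ZMod.castHom (hB q) (ZMod (B q)) (f q) = b q),
    dft n d x f *
      Complex.exp ((2 * (Real.pi : ℂ) * Complex.I) *
        (((∑ q, f q * a q : ZMod n)).val : ℂ) / (n : ℂ))

/-!
Write `ψ` for the standard additive character of `ZMod N`. The shift `ℓ(β)` contributes
`ψ (f · ℓ(β)) = ∏_q ψ ((f_q mod B^next_q) · β_q)`, which only depends on `f mod B^next`. Hence the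
`B^base`-bucket of `b` splits into the `B^next`-buckets lying over it, each carrying that constant
factor. These buckets are indexed exactly once by `b + r·B^base + s·B^prev`: `r + (B^prev/B^base)·s`
runs through the mixed-radix digits of `0, …, B^next/B^base - 1`, and `k ↦ b + k·B^base` is a
bijection from these onto the residues mod `B^next` that reduce to `b` mod `B^base`.
-/

open Finset

lemma AddChar.map_sum_eq_prod {ι A M : Type*} [AddCommMonoid A] [CommMonoid M] (ψ : AddChar A M)
    (s : Finset ι) (f : ι → A) : ψ (∑ i ∈ s, f i) = ∏ i ∈ s, ψ (f i) := by
  induction s using Finset.cons_induction with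
  | empty => simp
  | cons i s hi ih => rw [sum_cons, prod_cons, ψ.map_add_eq_mul, ih]

lemma NeZero.of_dvd {m n : ℕ} [NeZero n] (h : m ∣ n) : NeZero m :=
  ⟨by rintro rfl; exact NeZero.ne n (Nat.eq_zero_of_zero_dvd h)⟩

namespace ZMod

lemma cexp_val_eq_stdAddChar {N : ℕ} [NeZero N] (j : ZMod N) :
    Complex.exp (2 * (Real.pi : ℂ) * Complex.I * (j.val : ℂ) / (N : ℂ)) = stdAddChar j := by
  rw [stdAddChar_apply, toCircle_apply]

lemma cexp_sum_div_eq_prod_stdAddChar {ι : Type*} (s : Finset ι) (N : ι → ℕ)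
    [∀ i, NeZero (N i)] (m : ι → ℕ) :
    Complex.exp (2 * (Real.pi : ℂ) * Complex.I * ∑ i ∈ s, (m i : ℂ) / (N i : ℂ))
      = ∏ i ∈ s, stdAddChar (m i : ZMod (N i)) := by
  simp only [mul_sum, Complex.exp_sum, stdAddChar_apply, toCircle_natCast, mul_div_assoc]

lemma stdAddChar_natCast_mul_div {N n : ℕ} [NeZero N] [NeZero n] (h : N ∣ n) (m : ℕ) :
    stdAddChar ((m * (n / N) : ℕ) : ZMod n) = stdAddChar (m : ZMod N) := by
  obtain ⟨k, rfl⟩ := h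
  have hk : (k : ℂ) ≠ 0 := Nat.cast_ne_zero.mpr (right_ne_zero_of_mul (NeZero.ne (N * k)))
  have hN : (N : ℂ) ≠ 0 := Nat.cast_ne_zero.mpr (NeZero.ne N)
  rw [stdAddChar_apply, stdAddChar_apply, toCircle_natCast, toCircle_natCast,
    Nat.mul_div_cancel_left k (NeZero.pos N)]
  congr 1
  push_cast
  field_simp

lemma stdAddChar_mul_natCast_val_mul_div {N n : ℕ} [NeZero N] [NeZero n] (h : N ∣ n)
    (u : ZMod n) (v : ZMod N) :
    stdAddChar (u * ((v.val * (n / N) : ℕ) : ZMod n)) = stdAddChar (castHom h (ZMod N) u * v) := by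
  rw [← natCast_zmod_val u, ← Nat.cast_mul, ← mul_assoc, stdAddChar_natCast_mul_div h,
    map_natCast (castHom h (ZMod N)), Nat.cast_mul, natCast_zmod_val v]

lemma castHom_castHom {m N B : ℕ} (hN : N ∣ m) (hB : B ∣ N) (a : ZMod m) :
    castHom hB (ZMod B) (castHom hN (ZMod N) a) = castHom (hB.trans hN) (ZMod B) a :=
  RingHom.congr_fun (castHom_comp hB hN) a

end ZMod

section Digits

variable {B P N : ℕ}

lemma injOn_natCast_add_mul [NeZero N] (hBN : B ∣ N) (b : ℕ) :
    Set.InjOn (fun k : ℕ => ((b + k * B : ℕ) : ZMod N)) (Set.Iio (N / B)) := by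
  intro k hk l hl h
  have hB : 0 < B := Nat.pos_of_dvd_of_pos hBN (NeZero.pos N)
  have mul_lt : ∀ {j}, j < N / B → j * B < N := fun hj =>
    (Nat.lt_div_iff_mul_lt_of_dvd hB.ne' hBN).mp hj
  rw [Set.mem_Iio] at hk hl
  simp only [ZMod.natCast_eq_natCast_iff] at h
  exact Nat.eq_of_mul_eq_mul_right hB
    ((Nat.ModEq.add_left_cancel' b h).eq_of_lt_of_lt (mul_lt hk) (mul_lt hl))

lemma exists_lt_natCast_add_mul_eq [NeZero N] (hBN : B ∣ N) (b : ℕ) {c : ZMod N}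
    (hc : ZMod.castHom hBN (ZMod B) c = b) : ∃ k < N / B, ((b + k * B : ℕ) : ZMod N) = c := by
  have hdvd : B ∣ (c - b).val := by
    rw [← ZMod.natCast_eq_zero_iff, ← ZMod.cast_eq_val, ← ZMod.castHom_apply (h := hBN),
      map_sub, hc, map_natCast, sub_self]
  refine ⟨(c - b).val / B, Nat.div_lt_div_of_lt_of_dvd hBN (ZMod.val_lt _), ?_⟩
  rw [Nat.div_mul_cancel hdvd, Nat.cast_add, ZMod.natCast_zmod_val, add_sub_cancel]

lemma add_mul_add_mul_eq_finProdFinEquiv {m : ℕ} (hBP : B ∣ P) (b : ℕ) (p : Fin (P / B) × Fin m) :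
    b + p.1 * B + p.2 * P = b + (finProdFinEquiv p.swap : ℕ) * B := by
  have hP : (p.2 : ℕ) * P = p.2 * (P / B) * B := by rw [mul_assoc, Nat.div_mul_cancel hBP]
  rw [hP, finProdFinEquiv_apply_val, Prod.snd_swap, Prod.fst_swap]
  ring

lemma injective_natCast_add_mul_add_mul [NeZero N] (hBP : B ∣ P) (hPN : P ∣ N) (b : ℕ) :
    Function.Injective fun p : Fin (P / B) × Fin (N / P) => ((b + p.1 * B + p.2 * P : ℕ) : ZMod N) := by
  intro p p' h
  have hlt : ∀ p : Fin (P / B) × Fin (N / P), (finProdFinEquiv p.swap : ℕ) < N / B := fun p =>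
    Nat.div_mul_div hPN hBP ▸ (finProdFinEquiv p.swap).isLt
  simp only [add_mul_add_mul_eq_finProdFinEquiv hBP] at h
  exact Prod.swap_injective (finProdFinEquiv.injective
    (Fin.ext (injOn_natCast_add_mul (hBP.trans hPN) b (hlt p) (hlt p') h)))

lemma exists_natCast_add_mul_add_mul_eq [NeZero N] (hBP : B ∣ P) (hPN : P ∣ N) (b : ℕ)
    {c : ZMod N} (hc : ZMod.castHom (hBP.trans hPN) (ZMod B) c = b) :
    ∃ p : Fin (P / B) × Fin (N / P), ((b + p.1 * B + p.2 * P : ℕ) : ZMod N) = c := by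
  obtain ⟨k, hk, rfl⟩ := exists_lt_natCast_add_mul_eq (hBP.trans hPN) b hc
  rw [← Nat.div_mul_div hPN hBP] at hk
  refine ⟨(finProdFinEquiv.symm ⟨k, hk⟩).swap, ?_⟩
  rw [add_mul_add_mul_eq_finProdFinEquiv hBP, Prod.swap_swap, Equiv.apply_symm_apply]

lemma castHom_natCast_add_mul_add_mul (hBP : B ∣ P) (hPN : P ∣ N) (b r s : ℕ) :
    ZMod.castHom (hBP.trans hPN) (ZMod B) ((b + r * B + s * P : ℕ) : ZMod N) = b := by
  rw [map_natCast]
  push_cast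
  rw [ZMod.natCast_self, (ZMod.natCast_eq_zero_iff P B).mpr hBP]
  ring

end Digits

lemma sum_sum_natCast_add_mul_add_mul {d : ℕ} {M : Type*} [AddCommMonoid M]
    {B P N : Fin d → ℕ} [∀ i, NeZero (N i)] (hBP : ∀ i, B i ∣ P i) (hPN : ∀ i, P i ∣ N i)
    (b : Fin d → ℕ) (F : (∀ i, ZMod (N i)) → M) :
    ∑ r : ∀ i, Fin (P i / B i), ∑ s : ∀ i, Fin (N i / P i),
        F (fun i => ((b i + r i * B i + s i * P i : ℕ) : ZMod (N i)))
      = ∑ c ∈ univ.filter (fun c : ∀ i, ZMod (N i) =>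
          ∀ i, ZMod.castHom ((hBP i).trans (hPN i)) (ZMod (B i)) (c i) = b i), F c := by
  rw [← sum_product']
  refine sum_nbij (fun p i => ((b i + p.1 i * B i + p.2 i * P i : ℕ) : ZMod (N i)))
    (fun p _ => ?_) (fun p _ p' _ h => ?_) (fun c hc => ?_) (fun _ _ => rfl)
  · exact mem_filter.mpr ⟨mem_univ _, fun i => castHom_natCast_add_mul_add_mul (hBP i) (hPN i) _ _ _⟩
  · have hpi : ∀ i, (p.1 i, p.2 i) = (p'.1 i, p'.2 i) := fun i =>
      injective_natCast_add_mul_add_mul (hBP i) (hPN i) (b i) (congrFun h i)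
    exact Prod.ext (funext fun i => congrArg Prod.fst (hpi i))
      (funext fun i => congrArg Prod.snd (hpi i))
  · choose p hp using fun i =>
      exists_natCast_add_mul_add_mul_eq (hBP i) (hPN i) (b i) ((mem_filter.mp hc).2 i)
    exact ⟨(fun i => (p i).1, fun i => (p i).2), mem_coe.mpr (mem_univ _), funext hp⟩

lemma bucket_eq_sum_stdAddChar (n d : ℕ) [NeZero n] (B : Fin d → ℕ) (hB : ∀ q, B q ∣ n)
    (x : (Fin d → ZMod n) → ℂ) (a : Fin d → ZMod n) (b : ∀ q, ZMod (B q)) :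
    bucket n d B hB x a b
      = ∑ f ∈ univ.filter (fun f : Fin d → ZMod n =>
          ∀ q, ZMod.castHom (hB q) (ZMod (B q)) (f q) = b q),
        dft n d x f * ZMod.stdAddChar (∑ q, f q * a q) := by
  simp only [bucket, ZMod.cexp_val_eq_stdAddChar]

lemma sum_prod_stdAddChar_mul_bucket (n d : ℕ) [NeZero n] {B N : Fin d → ℕ} [∀ q, NeZero (N q)]
    (hBN : ∀ q, B q ∣ N q) (hN : ∀ q, N q ∣ n) (x : (Fin d → ZMod n) → ℂ)
    (α : Fin d → ZMod n) (β : ∀ q, ZMod (N q)) (b : ∀ q, ZMod (B q)) :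
    ∑ c ∈ univ.filter (fun c : ∀ q, ZMod (N q) =>
        ∀ q, ZMod.castHom (hBN q) (ZMod (B q)) (c q) = b q),
        (∏ q, ZMod.stdAddChar (c q * β q)) * bucket n d N hN x α c
      = bucket n d B (fun q => (hBN q).trans (hN q)) x
          (α + fun q => (((β q).val * (n / N q) : ℕ) : ZMod n)) b := by
  set red : (Fin d → ZMod n) → ∀ q, ZMod (N q) := fun f q => ZMod.castHom (hN q) _ (f q)
  set χ : (∀ q, ZMod (N q)) → ℂ := fun c => ∏ q, ZMod.stdAddChar (c q * β q)
  have hshift : ∀ f : Fin d → ZMod n,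
      ZMod.stdAddChar (∑ q, f q * (α + fun q => (((β q).val * (n / N q) : ℕ) : ZMod n)) q)
        = ZMod.stdAddChar (∑ q, f q * α q) * χ (red f) := by
    intro f
    simp only [Pi.add_apply, mul_add, sum_add_distrib, AddChar.map_add_eq_mul,
      AddChar.map_sum_eq_prod _ _ (fun q => f q * _),
      ZMod.stdAddChar_mul_natCast_val_mul_div (hN _), χ, red]
  have hred : ∀ f, (red f ∈ univ.filter (fun c : ∀ q, ZMod (N q) =>
        ∀ q, ZMod.castHom (hBN q) (ZMod (B q)) (c q) = b q))
      ↔ ∀ q, ZMod.castHom ((hBN q).trans (hN q)) (ZMod (B q)) (f q) = b q := by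
    intro f
    simp only [mem_filter, mem_univ, true_and, red, ZMod.castHom_castHom]
  calc _ = ∑ c ∈ univ.filter (fun c : ∀ q, ZMod (N q) =>
          ∀ q, ZMod.castHom (hBN q) (ZMod (B q)) (c q) = b q),
        ∑ f ∈ univ.filter (fun f => red f = c),
          dft n d x f * ZMod.stdAddChar (∑ q, f q * α q) * χ (red f) := by
        refine sum_congr rfl fun c _ => ?_
        rw [bucket_eq_sum_stdAddChar, mul_sum, filter_congr (q := fun f => red f = c)
          (fun f _ => funext_iff.symm)]
        exact sum_congr rfl fun f hf => by rw [(mem_filter.mp hf).2, mul_comm]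
    _ = _ := by
        rw [sum_fiberwise_eq_sum_filter, bucket_eq_sum_stdAddChar, filter_congr (fun f _ => hred f)]
        simp only [hshift, mul_assoc]

theorem stmt10_general (n d : ℕ) [NeZero n]
    (Bbase Bprev Bnext : Fin d → ℕ)
    (hbp : ∀ q, Bbase q ∣ Bprev q) (hpn : ∀ q, Bprev q ∣ Bnext q)
    (hnn : ∀ q, Bnext q ∣ n)
    (x : (Fin d → ZMod n) → ℂ) (α : Fin d → ZMod n)
    (β : ∀ q, ZMod (Bnext q))
    (b : Fin d → ℕ) :
    bucket n d Bbase (fun q => (hbp q).trans ((hpn q).trans (hnn q))) x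
        (α + fun q => (((β q).val * (n / Bnext q) : ℕ) : ZMod n))
        (fun q => ((b q : ℕ) : ZMod (Bbase q)))
      = ∑ r : ∀ q, Fin (Bprev q / Bbase q), ∑ s : ∀ q, Fin (Bnext q / Bprev q),
          Complex.exp ((2 * (Real.pi : ℂ) * Complex.I) *
            ∑ q, (((b q + (r q : ℕ) * Bbase q + (s q : ℕ) * Bprev q) * (β q).val : ℕ) : ℂ)
              / ((Bnext q : ℕ) : ℂ)) *
          bucket n d Bnext hnn x α
            (fun q => (((b q + (r q : ℕ) * Bbase q + (s q : ℕ) * Bprev q : ℕ)) :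
              ZMod (Bnext q))) := by
  have : ∀ q, NeZero (Bnext q) := fun q => NeZero.of_dvd (hnn q)
  rw [← sum_prod_stdAddChar_mul_bucket n d (fun q => (hbp q).trans (hpn q)) hnn,
    ← sum_sum_natCast_add_mul_add_mul hbp hpn b
      fun c => (∏ q, ZMod.stdAddChar (c q * β q)) * bucket n d Bnext hnn x α c]
  refine sum_congr rfl fun r _ => sum_congr rfl fun s _ => ?_
  rw [ZMod.cexp_sum_div_eq_prod_stdAddChar]
  simp only [Nat.cast_mul, ZMod.natCast_zmod_val]

theorem stmt10 (n d : ℕ) [NeZero n] (hd : 1 ≤ d)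
    (Bbase Bprev Bnext : Fin d → ℕ)
    [∀ q, NeZero (Bbase q)] [∀ q, NeZero (Bprev q)] [∀ q, NeZero (Bnext q)]
    (hbp : ∀ q, Bbase q ∣ Bprev q) (hpn : ∀ q, Bprev q ∣ Bnext q)
    (hnn : ∀ q, Bnext q ∣ n)
    (x : (Fin d → ZMod n) → ℂ) (α : Fin d → ZMod n)
    (β : ∀ q, ZMod (Bnext q))
    (b : Fin d → ℕ) (hb : ∀ q, b q < Bbase q) :
    bucket n d Bbase (fun q => (hbp q).trans ((hpn q).trans (hnn q))) x
        (α + fun q => (((β q).val * (n / Bnext q) : ℕ) : ZMod n))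
        (fun q => ((b q : ℕ) : ZMod (Bbase q)))
      = ∑ r : ∀ q, Fin (Bprev q / Bbase q), ∑ s : ∀ q, Fin (Bnext q / Bprev q),
          Complex.exp ((2 * (Real.pi : ℂ) * Complex.I) *
            ∑ q, (((b q + (r q : ℕ) * Bbase q + (s q : ℕ) * Bprev q) * (β q).val : ℕ) : ℂ)
              / ((Bnext q : ℕ) : ℂ)) *
          bucket n d Bnext hnn x α
            (fun q => (((b q + (r q : ℕ) * Bbase q + (s q : ℕ) * Bprev q : ℕ)) :
              ZMod (Bnext q))) :=
  stmt10_general n d Bbase Bprev Bnext hbp hpn hnn x α β b
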